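/- arXiv:2109.12198 — 5 statements merged into one kernel-verified Lean document; each statement's English description precedes it below -/
import Mathlib

section
/- The function f is differentiable on (0, R₂) with derivative f'(r) = φ(r) g(r), and this derivative satisfies φ(R₂)/2 ≤ f'(r) ≤ 1 for all r ∈ (0, R₂). Moreover f is constant on [R₂, ∞) (equal to f(R₂)) and f is strictly increasing on [0, R₂]. -/
open MeasureTheory intervalIntegral

/-- The function `f` is differentiable on `(0, R₂)` with
derivative `f'(r) = φ(r) g(r)`, satisfying `φ(R₂)/2 ≤ f'(r) ≤ 1` there;
moreover `f` is constant (equal to `f(R₂)`) on `[R₂, ∞)` and strictly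
increasing on `[0, R₂]`. -/
theorem stmt_2 (σ α M R₁ R₂ ξ β : ℝ) (κ h φ Φ g f : ℝ → ℝ)
    (hσ : 0 < σ) (hα : 0 ≤ α) (hM : 0 < M)
    (hR₁ : 0 < R₁) (hR₁₂ : R₁ ≤ R₂)
    (hκ_cont : ContinuousOn κ (Set.Ioi (0 : ℝ)))
    (hκ_nonneg : ∀ r : ℝ, 0 < r → 0 ≤ κ r)
    (hκ_int : IntervalIntegrable (fun s => s * κ s) volume 0 1)
    (hh : ∀ r, h r = (σ ^ 2)⁻¹ * ((1 / 2) * (∫ s in (0:ℝ)..r, s * κ s) + α * M * r))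
    (hφ : ∀ r, φ r = Real.exp (-h r))
    (hΦ : ∀ r, Φ r = ∫ s in (0:ℝ)..r, φ s)
    (hξ : ξ = (∫ s in (0:ℝ)..R₁, (φ s)⁻¹)⁻¹)
    (hβ : β = (∫ s in (0:ℝ)..R₂, Φ s / φ s)⁻¹)
    (hg : ∀ r, g r = 1 - (ξ / 4) * (∫ s in (0:ℝ)..(min r R₁), (φ s)⁻¹)
      - (β / 4) * (∫ s in (0:ℝ)..(min r R₂), Φ s / φ s))
    (hf : ∀ r, f r = ∫ s in (0:ℝ)..(min r R₂), φ s * g s) :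
    (∀ r ∈ Set.Ioo 0 R₂, HasDerivAt f (φ r * g r) r ∧
      φ R₂ / 2 ≤ φ r * g r ∧ φ r * g r ≤ 1) ∧
    (∀ r : ℝ, R₂ ≤ r → f r = f R₂) ∧
    StrictMonoOn f (Set.Icc 0 R₂) := by
  have hR₂ : (0:ℝ) < R₂ := lt_of_lt_of_le hR₁ hR₁₂
  set S : Set ℝ := Set.Icc 0 R₂ with hS
  have hSuIcc : Set.uIcc (0:ℝ) R₂ = S := Set.uIcc_of_le hR₂.le
  have hsub : ∀ {a b : ℝ}, a ∈ S → b ∈ S → Set.uIcc a b ⊆ S := by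
    intro a b ha hb
    rw [← hSuIcc]
    exact Set.uIcc_subset_uIcc (hSuIcc ▸ ha) (hSuIcc ▸ hb)
  -- integrability of s ↦ s * κ s
  have hsκ_cont : ContinuousOn (fun s => s * κ s) (Set.Ioi (0:ℝ)) :=
    continuousOn_id.mul hκ_cont
  have hsκ_int : ∀ r : ℝ, 0 ≤ r → IntervalIntegrable (fun s => s * κ s) volume 0 r := by
    intro r hr
    rcases le_or_gt r 1 with h1 | h1
    · refine hκ_int.mono_set ?_
      rw [Set.uIcc_of_le hr, Set.uIcc_of_le zero_le_one]
      exact Set.Icc_subset_Icc le_rfl h1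
    · refine hκ_int.trans ?_
      refine (hsκ_cont.mono ?_).intervalIntegrable
      rw [Set.uIcc_of_le h1.le]
      intro x hx
      exact lt_of_lt_of_le zero_lt_one hx.1
  set K : ℝ → ℝ := fun r => ∫ s in (0:ℝ)..r, s * κ s with hK
  have hsκ_nonneg : ∀ u : ℝ, 0 ≤ u → 0 ≤ u * κ u := by
    intro u hu
    rcases eq_or_lt_of_le hu with h | h
    · simp [← h]
    · exact mul_nonneg hu (hκ_nonneg u h)
  have hK_nonneg : ∀ r : ℝ, 0 ≤ r → 0 ≤ K r := by
    intro r hr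
    exact intervalIntegral.integral_nonneg hr (fun u hu => hsκ_nonneg u hu.1)
  have hK_mono : ∀ r ∈ S, K r ≤ K R₂ := by
    intro r hr
    have h2 : IntervalIntegrable (fun s => s * κ s) volume r R₂ :=
      (hsκ_int R₂ hR₂.le).mono_set (by rw [hSuIcc]; exact hsub hr (Set.right_mem_Icc.2 hR₂.le))
    have hadd := intervalIntegral.integral_add_adjacent_intervals (hsκ_int r hr.1) h2
    have hnn : 0 ≤ ∫ s in r..R₂, s * κ s :=
      intervalIntegral.integral_nonneg hr.2 (fun u hu => hsκ_nonneg u (le_trans hr.1 hu.1))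
    simp only [hK]
    linarith [hadd]
  have hK_c : ContinuousOn K S := by
    have hIcc : IntegrableOn (fun s => s * κ s) (Set.uIcc (0:ℝ) R₂) volume := by
      rw [hSuIcc]
      exact (intervalIntegrable_iff_integrableOn_Icc_of_le hR₂.le).1 (hsκ_int R₂ hR₂.le)
    have := intervalIntegral.continuousOn_primitive_interval hIcc
    rwa [hSuIcc] at this
  -- continuity and positivity of φ
  have hh_c : ContinuousOn h S := by
    have : ContinuousOn (fun r => (σ ^ 2)⁻¹ * ((1 / 2) * K r + α * M * r)) S :=
      continuousOn_const.mul ((continuousOn_const.mul hK_c).add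
        (continuousOn_const.mul continuousOn_id))
    exact this.congr (fun r _ => hh r)
  have hφ_pos : ∀ r, 0 < φ r := fun r => (hφ r) ▸ Real.exp_pos _
  have hφ_c : ContinuousOn φ S :=
    (Real.continuous_exp.comp_continuousOn hh_c.neg).congr (fun r _ => hφ r)
  have hφinv_c : ContinuousOn (fun s => (φ s)⁻¹) S :=
    hφ_c.inv₀ (fun x _ => (hφ_pos x).ne')
  have hφ_int : ∀ {a b : ℝ}, a ∈ S → b ∈ S → IntervalIntegrable φ volume a b :=
    fun ha hb => (hφ_c.mono (hsub ha hb)).intervalIntegrable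
  -- Φ
  have hΦ_c : ContinuousOn Φ S := by
    have hIcc : IntegrableOn φ (Set.uIcc (0:ℝ) R₂) volume := by
      rw [hSuIcc]
      exact (intervalIntegrable_iff_integrableOn_Icc_of_le hR₂.le).1
        (hφ_int (Set.left_mem_Icc.2 hR₂.le) (Set.right_mem_Icc.2 hR₂.le))
    have := intervalIntegral.continuousOn_primitive_interval hIcc
    rw [hSuIcc] at this
    exact this.congr (fun r _ => hΦ r)
  have hΦ_pos : ∀ r ∈ S, 0 < r → 0 < Φ r := by
    intro r hr hr0
    rw [hΦ r]
    exact intervalIntegral.intervalIntegral_pos_of_pos_on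
      (hφ_int (Set.left_mem_Icc.2 hR₂.le) hr) (fun x _ => hφ_pos x) hr0
  have hΦ_nonneg : ∀ r ∈ S, 0 ≤ Φ r := by
    intro r hr
    rw [hΦ r]
    exact intervalIntegral.integral_nonneg hr.1 (fun u _ => (hφ_pos u).le)
  have hq_c : ContinuousOn (fun s => Φ s / φ s) S :=
    hΦ_c.div hφ_c (fun x _ => (hφ_pos x).ne')
  have hq_nonneg : ∀ s ∈ S, 0 ≤ Φ s / φ s :=
    fun s hs => div_nonneg (hΦ_nonneg s hs) (hφ_pos s).le
  -- memberships
  have hmem₁ : ∀ r : ℝ, 0 ≤ r → min r R₁ ∈ S :=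
    fun r hr => ⟨le_min hr hR₁.le, le_trans (min_le_right _ _) hR₁₂⟩
  have hmem₂ : ∀ r : ℝ, 0 ≤ r → min r R₂ ∈ S :=
    fun r hr => ⟨le_min hr hR₂.le, min_le_right _ _⟩
  have hR₁S : R₁ ∈ S := ⟨hR₁.le, hR₁₂⟩
  have hR₂S : R₂ ∈ S := Set.right_mem_Icc.2 hR₂.le
  have h0S : (0:ℝ) ∈ S := Set.left_mem_Icc.2 hR₂.le
  -- bounds for the two integral terms in g
  have hE_pos : 0 < ∫ s in (0:ℝ)..R₁, (φ s)⁻¹ :=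
    intervalIntegral.intervalIntegral_pos_of_pos_on
      ((hφinv_c.mono (hsub h0S hR₁S)).intervalIntegrable)
      (fun x _ => inv_pos.2 (hφ_pos x)) hR₁
  have hF_pos : 0 < ∫ s in (0:ℝ)..R₂, Φ s / φ s := by
    refine intervalIntegral.intervalIntegral_pos_of_pos_on
      ((hq_c.mono (hsub h0S hR₂S)).intervalIntegrable) ?_ hR₂
    intro x hx
    exact div_pos (hΦ_pos x ⟨hx.1.le, hx.2.le⟩ hx.1) (hφ_pos x)
  have hξ_pos : 0 < ξ := hξ ▸ inv_pos.2 hE_pos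
  have hβ_pos : 0 < β := hβ ▸ inv_pos.2 hF_pos
  have hterm : ∀ (p : ℝ → ℝ), ContinuousOn p S → (∀ s ∈ S, 0 ≤ p s) →
      ∀ {m c : ℝ}, m ∈ S → c ∈ S → m ≤ c →
      (0 ≤ ∫ s in (0:ℝ)..m, p s) ∧ (∫ s in (0:ℝ)..m, p s) ≤ ∫ s in (0:ℝ)..c, p s := by
    intro p hpc hpn m c hm hc hmc
    have h1 : IntervalIntegrable p volume 0 m := (hpc.mono (hsub h0S hm)).intervalIntegrable
    have h2 : IntervalIntegrable p volume m c := (hpc.mono (hsub hm hc)).intervalIntegrable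
    have hadd := intervalIntegral.integral_add_adjacent_intervals h1 h2
    have hnn1 : 0 ≤ ∫ s in (0:ℝ)..m, p s :=
      intervalIntegral.integral_nonneg hm.1 (fun u hu => hpn u ⟨hu.1, le_trans hu.2 hm.2⟩)
    have hnn2 : 0 ≤ ∫ s in m..c, p s :=
      intervalIntegral.integral_nonneg hmc (fun u hu => hpn u ⟨le_trans hm.1 hu.1, le_trans hu.2 hc.2⟩)
    exact ⟨hnn1, by linarith⟩
  have hg_bounds : ∀ r : ℝ, 0 ≤ r → 1 / 2 ≤ g r ∧ g r ≤ 1 := by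
    intro r hr
    obtain ⟨hA0, hA1⟩ := hterm (fun s => (φ s)⁻¹) hφinv_c
      (fun s _ => (inv_pos.2 (hφ_pos s)).le) (hmem₁ r hr) hR₁S (min_le_right _ _)
    obtain ⟨hB0, hB1⟩ := hterm (fun s => Φ s / φ s) hq_c hq_nonneg
      (hmem₂ r hr) hR₂S (min_le_right _ _)
    set A := ∫ s in (0:ℝ)..(min r R₁), (φ s)⁻¹
    set B := ∫ s in (0:ℝ)..(min r R₂), Φ s / φ s
    have hξA : ξ * A ≤ 1 := by
      rw [hξ]
      calc (∫ s in (0:ℝ)..R₁, (φ s)⁻¹)⁻¹ * A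
          ≤ (∫ s in (0:ℝ)..R₁, (φ s)⁻¹)⁻¹ * (∫ s in (0:ℝ)..R₁, (φ s)⁻¹) :=
            mul_le_mul_of_nonneg_left hA1 (inv_pos.2 hE_pos).le
        _ = 1 := inv_mul_cancel₀ hE_pos.ne'
    have hβB : β * B ≤ 1 := by
      rw [hβ]
      calc (∫ s in (0:ℝ)..R₂, Φ s / φ s)⁻¹ * B
          ≤ (∫ s in (0:ℝ)..R₂, Φ s / φ s)⁻¹ * (∫ s in (0:ℝ)..R₂, Φ s / φ s) :=
            mul_le_mul_of_nonneg_left hB1 (inv_pos.2 hF_pos).le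
        _ = 1 := inv_mul_cancel₀ hF_pos.ne'
    have hξA0 : 0 ≤ ξ * A := mul_nonneg hξ_pos.le hA0
    have hβB0 : 0 ≤ β * B := mul_nonneg hβ_pos.le hB0
    rw [hg r]
    constructor <;> nlinarith
  -- bounds for φ
  have hh_nonneg : ∀ r : ℝ, 0 ≤ r → 0 ≤ h r := by
    intro r hr
    rw [hh r]
    have := hK_nonneg r hr
    positivity
  have hφ_le_one : ∀ r : ℝ, 0 ≤ r → φ r ≤ 1 := by
    intro r hr
    rw [hφ r]
    exact Real.exp_le_one_iff.2 (by linarith [hh_nonneg r hr])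
  have hφ_dec : ∀ r ∈ S, φ R₂ ≤ φ r := by
    intro r hr
    rw [hφ r, hφ R₂]
    apply Real.exp_le_exp.2
    have hKle := hK_mono r hr
    have : h r ≤ h R₂ := by
      rw [hh r, hh R₂]
      have hσ2 : (0:ℝ) ≤ (σ ^ 2)⁻¹ := by positivity
      have hαM : (0:ℝ) ≤ α * M := mul_nonneg hα hM.le
      have : α * M * r ≤ α * M * R₂ := mul_le_mul_of_nonneg_left hr.2 hαM
      apply mul_le_mul_of_nonneg_left _ hσ2
      simp only [hK] at hKle
      linarith
    linarith
  -- key derivative bound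
  have hbound : ∀ r ∈ S, φ R₂ / 2 ≤ φ r * g r ∧ φ r * g r ≤ 1 := by
    intro r hr
    obtain ⟨hg1, hg2⟩ := hg_bounds r hr.1
    constructor
    · calc φ R₂ / 2 = φ R₂ * (1 / 2) := by ring
        _ ≤ φ r * g r := mul_le_mul (hφ_dec r hr) hg1 (by norm_num) (hφ_pos r).le
    · calc φ r * g r ≤ 1 * 1 :=
          mul_le_mul (hφ_le_one r hr.1) hg2 (by linarith) zero_le_one
        _ = 1 := one_mul 1
  -- continuity of φ * g
  have hg_c : ContinuousOn g S := by
    have hP₁int : IntegrableOn (fun s => (φ s)⁻¹) (Set.uIcc (0:ℝ) R₂) volume := by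
      rw [hSuIcc]
      exact (intervalIntegrable_iff_integrableOn_Icc_of_le hR₂.le).1
        ((hφinv_c.mono (hsub h0S hR₂S)).intervalIntegrable)
    have hP₂int : IntegrableOn (fun s => Φ s / φ s) (Set.uIcc (0:ℝ) R₂) volume := by
      rw [hSuIcc]
      exact (intervalIntegrable_iff_integrableOn_Icc_of_le hR₂.le).1
        ((hq_c.mono (hsub h0S hR₂S)).intervalIntegrable)
    have hP₁ := intervalIntegral.continuousOn_primitive_interval hP₁int
    have hP₂ := intervalIntegral.continuousOn_primitive_interval hP₂int
    rw [hSuIcc] at hP₁ hP₂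
    have hc₁ : ContinuousOn (fun r => ∫ s in (0:ℝ)..(min r R₁), (φ s)⁻¹) S :=
      hP₁.comp ((continuous_id.min continuous_const).continuousOn)
        (fun r hr => hmem₁ r hr.1)
    have hc₂ : ContinuousOn (fun r => ∫ s in (0:ℝ)..(min r R₂), Φ s / φ s) S :=
      hP₂.comp ((continuous_id.min continuous_const).continuousOn)
        (fun r hr => hmem₂ r hr.1)
    exact (((continuousOn_const.sub (continuousOn_const.mul hc₁)).sub
      (continuousOn_const.mul hc₂))).congr (fun r _ => hg r)
  have hφg_c : ContinuousOn (fun s => φ s * g s) S := hφ_c.mul hg_c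
  have hIooS : Set.Ioo (0:ℝ) R₂ ⊆ S := Set.Ioo_subset_Icc_self
  refine ⟨?_, ?_, ?_⟩
  · -- derivative
    intro r hr
    have hrS : r ∈ S := hIooS hr
    have hint : IntervalIntegrable (fun s => φ s * g s) volume 0 r :=
      (hφg_c.mono (hsub h0S hrS)).intervalIntegrable
    have hmeas : StronglyMeasurableAtFilter (fun s => φ s * g s) (nhds r) volume :=
      (hφg_c.mono hIooS).stronglyMeasurableAtFilter isOpen_Ioo r hr
    have hcont : ContinuousAt (fun s => φ s * g s) r :=
      (hφg_c.mono hIooS).continuousAt (Ioo_mem_nhds hr.1 hr.2)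
    have hFd : HasDerivAt (fun u => ∫ s in (0:ℝ)..u, φ s * g s) (φ r * g r) r :=
      intervalIntegral.integral_hasDerivAt_right hint hmeas hcont
    have hfeq : f =ᶠ[nhds r] fun u => ∫ s in (0:ℝ)..u, φ s * g s := by
      filter_upwards [Ioo_mem_nhds hr.1 hr.2] with u hu
      rw [hf u, min_eq_left hu.2.le]
    exact ⟨hFd.congr_of_eventuallyEq hfeq, hbound r hrS⟩
  · -- constant beyond R₂
    intro r hrr
    rw [hf r, hf R₂, min_eq_right hrr, min_self]
  · -- strict monotonicity
    intro x hx y hy hxy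
    have h2 : IntervalIntegrable (fun s => φ s * g s) volume x y :=
      (hφg_c.mono (hsub hx hy)).intervalIntegrable
    have h1 : IntervalIntegrable (fun s => φ s * g s) volume 0 x :=
      (hφg_c.mono (hsub h0S hx)).intervalIntegrable
    have hadd := intervalIntegral.integral_add_adjacent_intervals h1 h2
    have hpos : 0 < ∫ s in x..y, φ s * g s := by
      refine intervalIntegral.intervalIntegral_pos_of_pos_on h2 ?_ hxy
      intro t ht
      have htS : t ∈ S := ⟨le_trans hx.1 ht.1.le, le_trans ht.2.le hy.2⟩
      have := (hbound t htS).1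
      have hφR₂ : 0 < φ R₂ / 2 := by linarith [hφ_pos R₂]
      linarith
    rw [hf x, hf y, min_eq_left hx.2, min_eq_left hy.2]
    linarith
end

section
/- For every r ≥ 0, the function f satisfies the sandwich bounds (1/2) Φ(min(r, R₂)) ≤ f(r) ≤ Φ(min(r, R₂)) ≤ min(r, R₂) ≤ r. In particular f(r) ≤ Φ(r) and f(r) ≤ r for all r ≥ 0. -/
open MeasureTheory intervalIntegral

private lemma stmt3_aux_mono {F : ℝ → ℝ} {a b : ℝ} (hab : a ≤ b)
    (h1 : IntervalIntegrable F volume 0 a)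
    (h2 : IntervalIntegrable F volume a b)
    (hnn : ∀ x ∈ Set.Icc a b, 0 ≤ F x) :
    (∫ s in (0:ℝ)..a, F s) ≤ ∫ s in (0:ℝ)..b, F s := by
  have hadd := intervalIntegral.integral_add_adjacent_intervals h1 h2
  have h3 : 0 ≤ ∫ s in a..b, F s := intervalIntegral.integral_nonneg hab hnn
  linarith

/-- For every `r ≥ 0`, the sandwich bounds
`(1/2) Φ(min(r,R₂)) ≤ f(r) ≤ Φ(min(r,R₂)) ≤ min(r,R₂) ≤ r` hold; in
particular `f(r) ≤ Φ(r)` and `f(r) ≤ r`. -/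
theorem stmt_3 (σ α M R₁ R₂ ξ β : ℝ) (κ h φ Φ g f : ℝ → ℝ)
    (hσ : 0 < σ) (hα : 0 ≤ α) (hM : 0 < M)
    (hR₁ : 0 < R₁) (hR₁₂ : R₁ ≤ R₂)
    (hκ_cont : ContinuousOn κ (Set.Ioi (0 : ℝ)))
    (hκ_nonneg : ∀ r : ℝ, 0 < r → 0 ≤ κ r)
    (hκ_int : IntervalIntegrable (fun s => s * κ s) volume 0 1)
    (hh : ∀ r, h r = (σ ^ 2)⁻¹ * ((1 / 2) * (∫ s in (0:ℝ)..r, s * κ s) + α * M * r))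
    (hφ : ∀ r, φ r = Real.exp (-h r))
    (hΦ : ∀ r, Φ r = ∫ s in (0:ℝ)..r, φ s)
    (hξ : ξ = (∫ s in (0:ℝ)..R₁, (φ s)⁻¹)⁻¹)
    (hβ : β = (∫ s in (0:ℝ)..R₂, Φ s / φ s)⁻¹)
    (hg : ∀ r, g r = 1 - (ξ / 4) * (∫ s in (0:ℝ)..(min r R₁), (φ s)⁻¹)
      - (β / 4) * (∫ s in (0:ℝ)..(min r R₂), Φ s / φ s))
    (hf : ∀ r, f r = ∫ s in (0:ℝ)..(min r R₂), φ s * g s) :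
    ∀ r : ℝ, 0 ≤ r →
      (1 / 2) * Φ (min r R₂) ≤ f r ∧ f r ≤ Φ (min r R₂) ∧
      Φ (min r R₂) ≤ min r R₂ ∧ min r R₂ ≤ r ∧
      f r ≤ Φ r ∧ f r ≤ r := by
  have hR₂ : 0 < R₂ := lt_of_lt_of_le hR₁ hR₁₂
  have hφpos : ∀ s : ℝ, 0 < φ s := fun s => by rw [hφ s]; exact Real.exp_pos _
  -- integrability of s*κ s on [0,r]
  have hκint : ∀ r : ℝ, 0 ≤ r → IntervalIntegrable (fun s => s * κ s) volume 0 r := by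
    intro r hr
    rcases le_or_gt r 1 with h1 | h1
    · exact hκ_int.mono_set (Set.uIcc_subset_uIcc Set.left_mem_uIcc
        (by rw [Set.uIcc_of_le zero_le_one]; exact ⟨hr, h1⟩))
    · refine hκ_int.trans ?_
      apply ContinuousOn.intervalIntegrable
      apply ContinuousOn.mul continuousOn_id
      apply hκ_cont.mono
      rw [Set.uIcc_of_le h1.le]
      intro x hx
      exact lt_of_lt_of_le one_pos hx.1
  have hκnn : ∀ x : ℝ, 0 ≤ x → 0 ≤ x * κ x := by
    intro x hx
    rcases eq_or_lt_of_le hx with h | h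
    · simp [← h]
    · exact mul_nonneg hx (hκ_nonneg x h)
  have hh0 : ∀ s : ℝ, 0 ≤ s → 0 ≤ h s := by
    intro s hs
    rw [hh s]
    have hI : 0 ≤ ∫ t in (0:ℝ)..s, t * κ t :=
      intervalIntegral.integral_nonneg hs (fun x hx => hκnn x hx.1)
    have : (0:ℝ) ≤ α * M * s := mul_nonneg (mul_nonneg hα hM.le) hs
    positivity
  have hφle1 : ∀ s : ℝ, 0 ≤ s → φ s ≤ 1 := by
    intro s hs
    rw [hφ s]
    exact Real.exp_le_one_iff.mpr (neg_nonpos.mpr (hh0 s hs))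
  -- continuity of φ on [0,b]
  have hφcont : ∀ b : ℝ, 0 ≤ b → ContinuousOn φ (Set.Icc 0 b) := by
    intro b hb
    have hint : IntegrableOn (fun s => s * κ s) (Set.uIcc 0 b) volume := by
      rw [Set.uIcc_of_le hb]
      exact (intervalIntegrable_iff_integrableOn_Icc_of_le hb).1 (hκint b hb)
    have hH : ContinuousOn (fun r => ∫ s in (0:ℝ)..r, s * κ s) (Set.Icc 0 b) := by
      have := intervalIntegral.continuousOn_primitive_interval hint
      rwa [Set.uIcc_of_le hb] at this
    have hhc : ContinuousOn h (Set.Icc 0 b) := by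
      have : ContinuousOn
          (fun r => (σ ^ 2)⁻¹ * ((1 / 2) * (∫ s in (0:ℝ)..r, s * κ s) + α * M * r))
          (Set.Icc 0 b) :=
        continuousOn_const.mul ((continuousOn_const.mul hH).add
          (continuousOn_const.mul continuousOn_id))
      exact this.congr (fun x _ => hh x)
    have : ContinuousOn (fun r => Real.exp (-h r)) (Set.Icc 0 b) :=
      Real.continuous_exp.comp_continuousOn hhc.neg
    exact this.congr (fun x _ => hφ x)
  -- interval integrability of φ on [a,b] ⊆ [0,∞)
  have hφint : ∀ a b : ℝ, 0 ≤ a → 0 ≤ b → IntervalIntegrable φ volume a b := by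
    intro a b ha hb
    apply ContinuousOn.intervalIntegrable
    exact (hφcont (max a b) (le_max_of_le_left ha)).mono
      (Set.uIcc_subset_Icc ⟨ha, le_max_left a b⟩ ⟨hb, le_max_right a b⟩)
  -- continuity of Φ on [0,b]
  have hΦcont : ∀ b : ℝ, 0 ≤ b → ContinuousOn Φ (Set.Icc 0 b) := by
    intro b hb
    have hint : IntegrableOn φ (Set.uIcc 0 b) volume := by
      rw [Set.uIcc_of_le hb]
      exact (intervalIntegrable_iff_integrableOn_Icc_of_le hb).1 (hφint 0 b le_rfl hb)
    have := intervalIntegral.continuousOn_primitive_interval hint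
    rw [Set.uIcc_of_le hb] at this
    exact this.congr (fun x _ => hΦ x)
  -- Φ basic facts
  have hΦnn : ∀ s : ℝ, 0 ≤ s → 0 ≤ Φ s := by
    intro s hs
    rw [hΦ s]
    exact intervalIntegral.integral_nonneg hs (fun x _ => (hφpos x).le)
  have hΦpos : ∀ s : ℝ, 0 < s → 0 < Φ s := by
    intro s hs
    rw [hΦ s]
    exact intervalIntegral_pos_of_pos_on (hφint 0 s le_rfl hs.le) (fun x _ => hφpos x) hs
  have hΦle : ∀ s : ℝ, 0 ≤ s → Φ s ≤ s := by
    intro s hs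
    rw [hΦ s]
    calc (∫ t in (0:ℝ)..s, φ t) ≤ ∫ _ in (0:ℝ)..s, (1:ℝ) :=
          intervalIntegral.integral_mono_on hs (hφint 0 s le_rfl hs)
            intervalIntegrable_const (fun x hx => hφle1 x hx.1)
      _ = s := by simp
  have hΦmono : ∀ a b : ℝ, 0 ≤ a → a ≤ b → Φ a ≤ Φ b := by
    intro a b ha hab
    rw [hΦ a, hΦ b]
    exact stmt3_aux_mono hab (hφint 0 a le_rfl ha) (hφint a b ha (ha.trans hab))
      (fun x _ => (hφpos x).le)
  -- integrands φ⁻¹ and Φ/φ : continuity and integrability on [0, R₂]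
  have hinvcont : ContinuousOn (fun s => (φ s)⁻¹) (Set.Icc 0 R₂) :=
    (hφcont R₂ hR₂.le).inv₀ (fun x _ => (hφpos x).ne')
  have hdivcont : ContinuousOn (fun s => Φ s / φ s) (Set.Icc 0 R₂) :=
    (hΦcont R₂ hR₂.le).div (hφcont R₂ hR₂.le) (fun x _ => (hφpos x).ne')
  have hinvint : ∀ a b : ℝ, 0 ≤ a → a ≤ R₂ → 0 ≤ b → b ≤ R₂ →
      IntervalIntegrable (fun s => (φ s)⁻¹) volume a b := by
    intro a b ha ha' hb hb'
    exact (hinvcont.mono (Set.uIcc_subset_Icc ⟨ha, ha'⟩ ⟨hb, hb'⟩)).intervalIntegrable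
  have hdivint : ∀ a b : ℝ, 0 ≤ a → a ≤ R₂ → 0 ≤ b → b ≤ R₂ →
      IntervalIntegrable (fun s => Φ s / φ s) volume a b := by
    intro a b ha ha' hb hb'
    exact (hdivcont.mono (Set.uIcc_subset_Icc ⟨ha, ha'⟩ ⟨hb, hb'⟩)).intervalIntegrable
  -- the normalizing integrals are positive
  set I₁ : ℝ := ∫ s in (0:ℝ)..R₁, (φ s)⁻¹ with hI₁
  set I₂ : ℝ := ∫ s in (0:ℝ)..R₂, Φ s / φ s with hI₂
  have hI₁pos : 0 < I₁ :=
    intervalIntegral_pos_of_pos_on (hinvint 0 R₁ le_rfl hR₂.le hR₁.le hR₁₂)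
      (fun x _ => inv_pos.mpr (hφpos x)) hR₁
  have hI₂pos : 0 < I₂ :=
    intervalIntegral_pos_of_pos_on (hdivint 0 R₂ le_rfl hR₂.le hR₂.le le_rfl)
      (fun x hx => div_pos (hΦpos x hx.1) (hφpos x)) hR₂
  have hξpos : 0 < ξ := by rw [hξ]; exact inv_pos.mpr hI₁pos
  have hβpos : 0 < β := by rw [hβ]; exact inv_pos.mpr hI₂pos
  -- bounds on g on [0, R₂]
  have hg_le1 : ∀ s : ℝ, 0 ≤ s → g s ≤ 1 := by
    intro s hs
    rw [hg s]
    have h1 : 0 ≤ ∫ t in (0:ℝ)..(min s R₁), (φ t)⁻¹ :=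
      intervalIntegral.integral_nonneg (le_min hs hR₁.le) (fun x _ => (inv_pos.mpr (hφpos x)).le)
    have h2 : 0 ≤ ∫ t in (0:ℝ)..(min s R₂), Φ t / φ t :=
      intervalIntegral.integral_nonneg (le_min hs hR₂.le)
        (fun x hx => div_nonneg (hΦnn x hx.1) (hφpos x).le)
    nlinarith [mul_nonneg (div_nonneg hξpos.le (by norm_num : (0:ℝ) ≤ 4)) h1,
      mul_nonneg (div_nonneg hβpos.le (by norm_num : (0:ℝ) ≤ 4)) h2]
  have hg_ge : ∀ s : ℝ, 0 ≤ s → 1 / 2 ≤ g s := by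
    intro s hs
    rw [hg s]
    have hA : (∫ t in (0:ℝ)..(min s R₁), (φ t)⁻¹) ≤ I₁ :=
      stmt3_aux_mono (min_le_right s R₁)
        (hinvint 0 (min s R₁) le_rfl hR₂.le (le_min hs hR₁.le) ((min_le_right s R₁).trans hR₁₂))
        (hinvint (min s R₁) R₁ (le_min hs hR₁.le) ((min_le_right s R₁).trans hR₁₂) hR₁.le hR₁₂)
        (fun x _ => (inv_pos.mpr (hφpos x)).le)
    have hB : (∫ t in (0:ℝ)..(min s R₂), Φ t / φ t) ≤ I₂ :=
      stmt3_aux_mono (min_le_right s R₂)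
        (hdivint 0 (min s R₂) le_rfl hR₂.le (le_min hs hR₂.le) (min_le_right s R₂))
        (hdivint (min s R₂) R₂ (le_min hs hR₂.le) (min_le_right s R₂) hR₂.le le_rfl)
        (fun x hx => div_nonneg (hΦnn x (le_trans (le_min hs hR₂.le) hx.1)) (hφpos x).le)
    have hξI : ξ * I₁ = 1 := by rw [hξ]; field_simp
    have hβI : β * I₂ = 1 := by rw [hβ]; field_simp
    have h1 : (ξ / 4) * (∫ t in (0:ℝ)..(min s R₁), (φ t)⁻¹) ≤ 1 / 4 := by
      calc (ξ / 4) * (∫ t in (0:ℝ)..(min s R₁), (φ t)⁻¹) ≤ (ξ / 4) * I₁ :=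
            mul_le_mul_of_nonneg_left hA (by positivity)
        _ = 1 / 4 := by rw [div_mul_eq_mul_div, hξI]
    have h2 : (β / 4) * (∫ t in (0:ℝ)..(min s R₂), Φ t / φ t) ≤ 1 / 4 := by
      calc (β / 4) * (∫ t in (0:ℝ)..(min s R₂), Φ t / φ t) ≤ (β / 4) * I₂ :=
            mul_le_mul_of_nonneg_left hB (by positivity)
        _ = 1 / 4 := by rw [div_mul_eq_mul_div, hβI]
    linarith
  -- continuity of g on [0, R₂]
  have hgcont : ContinuousOn g (Set.Icc 0 R₂) := by
    have hJ₁ : ContinuousOn (fun u => ∫ t in (0:ℝ)..u, (φ t)⁻¹) (Set.Icc 0 R₂) := by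
      have hint : IntegrableOn (fun t => (φ t)⁻¹) (Set.uIcc 0 R₂) volume := by
        rw [Set.uIcc_of_le hR₂.le]
        exact (intervalIntegrable_iff_integrableOn_Icc_of_le hR₂.le).1
          (hinvint 0 R₂ le_rfl hR₂.le hR₂.le le_rfl)
      have := intervalIntegral.continuousOn_primitive_interval hint
      rwa [Set.uIcc_of_le hR₂.le] at this
    have hJ₂ : ContinuousOn (fun u => ∫ t in (0:ℝ)..u, Φ t / φ t) (Set.Icc 0 R₂) := by
      have hint : IntegrableOn (fun t => Φ t / φ t) (Set.uIcc 0 R₂) volume := by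
        rw [Set.uIcc_of_le hR₂.le]
        exact (intervalIntegrable_iff_integrableOn_Icc_of_le hR₂.le).1
          (hdivint 0 R₂ le_rfl hR₂.le hR₂.le le_rfl)
      have := intervalIntegral.continuousOn_primitive_interval hint
      rwa [Set.uIcc_of_le hR₂.le] at this
    have hm₁ : ContinuousOn (fun s => ∫ t in (0:ℝ)..(min s R₁), (φ t)⁻¹) (Set.Icc 0 R₂) := by
      apply hJ₁.comp ((continuous_id.min continuous_const).continuousOn)
      intro x hx
      exact ⟨le_min hx.1 hR₁.le, min_le_of_right_le hR₁₂⟩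
    have hm₂ : ContinuousOn (fun s => ∫ t in (0:ℝ)..(min s R₂), Φ t / φ t) (Set.Icc 0 R₂) := by
      apply hJ₂.comp ((continuous_id.min continuous_const).continuousOn)
      intro x hx
      exact ⟨le_min hx.1 hR₂.le, min_le_right x R₂⟩
    have : ContinuousOn
        (fun s => 1 - (ξ / 4) * (∫ t in (0:ℝ)..(min s R₁), (φ t)⁻¹)
          - (β / 4) * (∫ t in (0:ℝ)..(min s R₂), Φ t / φ t)) (Set.Icc 0 R₂) :=
      (continuousOn_const.sub (continuousOn_const.mul hm₁)).sub (continuousOn_const.mul hm₂)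
    exact this.congr (fun x _ => hg x)
  -- main argument
  intro r hr
  set m : ℝ := min r R₂ with hm
  have hm0 : 0 ≤ m := le_min hr hR₂.le
  have hmR₂ : m ≤ R₂ := min_le_right r R₂
  have hmr : m ≤ r := min_le_left r R₂
  have hφg_int : IntervalIntegrable (fun s => φ s * g s) volume 0 m := by
    apply ContinuousOn.intervalIntegrable
    have : ContinuousOn (fun s => φ s * g s) (Set.Icc 0 R₂) :=
      ((hφcont R₂ hR₂.le).mul hgcont)
    exact this.mono (Set.uIcc_subset_Icc ⟨le_rfl, hR₂.le⟩ ⟨hm0, hmR₂⟩)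
  have hupper : f r ≤ Φ m := by
    rw [hf r, hΦ m, ← hm]
    apply intervalIntegral.integral_mono_on hm0 hφg_int (hφint 0 m le_rfl hm0)
    intro x hx
    have := hg_le1 x hx.1
    nlinarith [hφpos x]
  have hlower : (1 / 2) * Φ m ≤ f r := by
    rw [hf r, hΦ m, ← hm, ← intervalIntegral.integral_const_mul]
    apply intervalIntegral.integral_mono_on hm0
      ((hφint 0 m le_rfl hm0).const_mul _) hφg_int
    intro x hx
    have := hg_ge x hx.1
    nlinarith [hφpos x]
  have hΦm : Φ m ≤ m := hΦle m hm0
  refine ⟨hlower, hupper, hΦm, hmr, ?_, ?_⟩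
  · exact hupper.trans (hΦmono m r hm0 hmr)
  · exact hupper.trans (hΦm.trans hmr)
end

section
/- For every r ∈ (0, ∞) with r ∉ {R₁, R₂}, the function f is twice differentiable at r with f''(r) = −h'(r) f'(r) − (ξ/4)·𝟙(r < R₁) − (β/4) Φ(r)·𝟙(r < R₂), where h'(r) = σ⁻² ( r κ(r)/2 + α M ). In particular f''(r) ≤ 0 at all such r, and f is concave on [0, ∞). -/
/-!
On `(0, R₂)` the function `f` is the primitive of `φ g` and beyond `R₂` it is constant. Since
`φ = exp (-h)` satisfies `φ' = -h' φ` and `g` is, away from `R₁` and `R₂`, an affine combination of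
primitives of `1 / φ` and `Φ / φ`, the product rule gives the formula for `f''`. It is nonpositive
because `h' ≥ 0` and because the normalisations `ξ`, `β` keep `g ≥ 1/2`. For concavity, `φ g` is a
product of nonnegative antitone functions, so its primitive `F` is concave and monotone, and
`f = min F (F R₂)` on `[0, ∞)`.
-/

open MeasureTheory intervalIntegral Set Filter Topology

noncomputable def truncatedPrimitive (u : ℝ → ℝ) (R x : ℝ) : ℝ := ∫ s in (0:ℝ)..min x R, u s

section Primitive

variable {u : ℝ → ℝ} {R r : ℝ}

lemma ContinuousOn.intervalIntegrable_zero_of_Ici (hu : ContinuousOn u (Ici 0)) {b : ℝ}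
    (hb : 0 ≤ b) : IntervalIntegrable u volume 0 b :=
  (hu.mono Icc_subset_Ici_self).intervalIntegrable_of_Icc hb

lemma IntervalIntegrable.zero_of_continuousOn_Ioi (h₁ : IntervalIntegrable u volume 0 1)
    (hu : ContinuousOn u (Ioi 0)) {b : ℝ} (hb : 0 ≤ b) : IntervalIntegrable u volume 0 b := by
  rcases le_total b 1 with hb1 | hb1
  · refine h₁.mono_set (uIcc_subset_uIcc left_mem_uIcc ?_)
    rw [uIcc_of_le zero_le_one]
    exact ⟨hb, hb1⟩
  · exact h₁.trans ((hu.mono fun x hx => one_pos.trans_le hx.1).intervalIntegrable_of_Icc hb1)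

lemma continuousOn_primitive_Ici (hu : ∀ b, 0 ≤ b → IntervalIntegrable u volume 0 b) :
    ContinuousOn (fun x => ∫ s in (0:ℝ)..x, u s) (Ici 0) := by
  intro x (hx : 0 ≤ x)
  have hcont := continuousOn_primitive_interval' (hu (x + 1) (by linarith)) left_mem_uIcc
  rw [uIcc_of_le (by linarith), ← Ici_inter_Iic] at hcont
  exact (continuousWithinAt_inter (Iic_mem_nhds (by linarith))).mp (hcont x ⟨hx, by simp⟩)

lemma hasDerivAt_primitive_of_pos (hu : ∀ b, 0 ≤ b → IntervalIntegrable u volume 0 b)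
    (hc : ContinuousOn u (Ioi 0)) (hr : 0 < r) :
    HasDerivAt (fun x => ∫ s in (0:ℝ)..x, u s) (u r) r :=
  integral_hasDerivAt_right (hu r hr.le) (hc.stronglyMeasurableAtFilter isOpen_Ioi r hr)
    (hc.continuousAt (Ioi_mem_nhds hr))

lemma monotoneOn_primitive_Ici (hu : ∀ b, 0 ≤ b → IntervalIntegrable u volume 0 b)
    (hpos : ∀ s, 0 ≤ s → 0 ≤ u s) : MonotoneOn (fun x => ∫ s in (0:ℝ)..x, u s) (Ici 0) :=
  fun _ ha b _ hab => integral_mono_interval le_rfl ha hab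
    ((ae_restrict_iff' measurableSet_Ioc).mpr (.of_forall fun s hs => hpos s hs.1.le))
    (hu b (le_trans ha hab))

end Primitive

section Truncated

variable {u : ℝ → ℝ} {R r : ℝ}

lemma truncatedPrimitive_eventuallyEq_of_lt (h : r < R) :
    truncatedPrimitive u R =ᶠ[𝓝 r] fun x => ∫ s in (0:ℝ)..x, u s := by
  filter_upwards [Iio_mem_nhds h] with x hx
  rw [truncatedPrimitive, min_eq_left hx.le]

lemma truncatedPrimitive_eventuallyEq_of_gt (h : R < r) :
    truncatedPrimitive u R =ᶠ[𝓝 r] fun _ => ∫ s in (0:ℝ)..R, u s := by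
  filter_upwards [Ioi_mem_nhds h] with x hx
  rw [truncatedPrimitive, min_eq_right hx.le]

lemma continuousOn_truncatedPrimitive (hu : ∀ b, 0 ≤ b → IntervalIntegrable u volume 0 b)
    (hR : 0 ≤ R) : ContinuousOn (truncatedPrimitive u R) (Ici 0) :=
  (continuousOn_primitive_Ici hu).comp (continuous_id.min continuous_const).continuousOn
    fun _ hx => le_min hx hR

lemma monotoneOn_truncatedPrimitive (hu : ∀ b, 0 ≤ b → IntervalIntegrable u volume 0 b)
    (hpos : ∀ s, 0 ≤ s → 0 ≤ u s) (hR : 0 ≤ R) : MonotoneOn (truncatedPrimitive u R) (Ici 0) :=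
  fun _ ha _ hb hab => monotoneOn_primitive_Ici hu hpos (le_min ha hR) (le_min hb hR)
    (min_le_min_right R hab)

lemma truncatedPrimitive_le (hu : ∀ b, 0 ≤ b → IntervalIntegrable u volume 0 b)
    (hpos : ∀ s, 0 ≤ s → 0 ≤ u s) (hR : 0 ≤ R) {x : ℝ} (hx : 0 ≤ x) :
    truncatedPrimitive u R x ≤ ∫ s in (0:ℝ)..R, u s :=
  monotoneOn_primitive_Ici hu hpos (le_min hx hR) hR (min_le_right x R)

lemma hasDerivAt_truncatedPrimitive (hu : ∀ b, 0 ≤ b → IntervalIntegrable u volume 0 b)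
    (hc : ContinuousOn u (Ioi 0)) (hr : 0 < r) (hrR : r ≠ R) :
    HasDerivAt (truncatedPrimitive u R) (if r < R then u r else 0) r := by
  rcases hrR.lt_or_gt with h | h
  · rw [if_pos h]
    exact (hasDerivAt_primitive_of_pos hu hc hr).congr_of_eventuallyEq
      (truncatedPrimitive_eventuallyEq_of_lt h)
  · rw [if_neg h.not_gt]
    exact (hasDerivAt_const r _).congr_of_eventuallyEq (truncatedPrimitive_eventuallyEq_of_gt h)

lemma hasDerivAt_deriv_truncatedPrimitive (hu : ∀ b, 0 ≤ b → IntervalIntegrable u volume 0 b)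
    (hc : ContinuousOn u (Ioi 0)) (hr : 0 < r) (hrR : r ≠ R) {d : ℝ}
    (hd : r < R → HasDerivAt u d r) :
    HasDerivAt (deriv (truncatedPrimitive u R)) (if r < R then d else 0) r := by
  rcases hrR.lt_or_gt with h | h
  · rw [if_pos h]
    refine (hd h).congr_of_eventuallyEq ?_
    filter_upwards [Ioo_mem_nhds hr h] with x hx
    rw [(hasDerivAt_truncatedPrimitive hu hc hx.1 hx.2.ne).deriv, if_pos hx.2]
  · rw [if_neg h.not_gt]
    refine (hasDerivAt_const r 0).congr_of_eventuallyEq ?_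
    simpa using (truncatedPrimitive_eventuallyEq_of_gt (u := u) h).deriv

lemma concaveOn_truncatedPrimitive (hu : ContinuousOn u (Ici 0)) (hpos : ∀ s, 0 ≤ s → 0 ≤ u s)
    (hanti : AntitoneOn u (Ici 0)) (hR : 0 ≤ R) :
    ConcaveOn ℝ (Ici 0) (truncatedPrimitive u R) := by
  have hint := fun b (hb : 0 ≤ b) => hu.intervalIntegrable_zero_of_Ici hb
  have hderiv : ∀ x ∈ Ioi (0:ℝ), HasDerivAt (fun x => ∫ s in (0:ℝ)..x, u s) (u x) x :=
    fun x hx => hasDerivAt_primitive_of_pos hint (hu.mono Ioi_subset_Ici_self) hx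
  have hconc : ConcaveOn ℝ (Ici 0) fun x => ∫ s in (0:ℝ)..x, u s := by
    refine AntitoneOn.concaveOn_of_deriv (convex_Ici 0) (continuousOn_primitive_Ici hint) ?_ ?_ <;>
      rw [interior_Ici]
    · exact fun x hx => (hderiv x hx).differentiableAt.differentiableWithinAt
    · intro a ha b hb hab
      rw [(hderiv a ha).deriv, (hderiv b hb).deriv]
      exact hanti (Ioi_subset_Ici_self ha) (Ioi_subset_Ici_self hb) hab
  -- the primitive is monotone, so truncating it at `R` is taking its minimum with a constant
  refine (hconc.inf (concaveOn_const (∫ s in (0:ℝ)..R, u s) (convex_Ici 0))).congr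
    fun x (hx : 0 ≤ x) => ?_
  have hmono := monotoneOn_primitive_Ici hint hpos
  rcases le_total x R with h | h
  · simp [truncatedPrimitive, min_eq_left h, hmono hx hR h]
  · simp [truncatedPrimitive, min_eq_right h, hmono hR hx h]

end Truncated

lemma inv_integral_nonneg {u : ℝ → ℝ} {R : ℝ} (hpos : ∀ s, 0 ≤ s → 0 ≤ u s) (hR : 0 ≤ R) :
    0 ≤ (∫ s in (0:ℝ)..R, u s)⁻¹ :=
  inv_nonneg.mpr (integral_nonneg hR fun s hs => hpos s hs.1)

section Weight

variable {σ α M r : ℝ} {κ h φ : ℝ → ℝ}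

lemma continuousOn_weight
    (hκ_int : ∀ b, 0 ≤ b → IntervalIntegrable (fun s => s * κ s) volume 0 b)
    (hh : ∀ r, h r = (σ ^ 2)⁻¹ * ((1 / 2) * (∫ s in (0:ℝ)..r, s * κ s) + α * M * r))
    (hφ : ∀ r, φ r = Real.exp (-h r)) : ContinuousOn φ (Ici 0) := by
  rw [funext hφ, funext hh]
  exact ((continuousOn_const.mul ((continuousOn_const.mul (continuousOn_primitive_Ici hκ_int)).add
    (continuousOn_const.mul continuousOn_id))).neg).rexp

lemma antitoneOn_weight (hκ_nonneg : ∀ r, 0 < r → 0 ≤ κ r) (hαM : 0 ≤ α * M)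
    (hκ_int : ∀ b, 0 ≤ b → IntervalIntegrable (fun s => s * κ s) volume 0 b)
    (hh : ∀ r, h r = (σ ^ 2)⁻¹ * ((1 / 2) * (∫ s in (0:ℝ)..r, s * κ s) + α * M * r))
    (hφ : ∀ r, φ r = Real.exp (-h r)) : AntitoneOn φ (Ici 0) := by
  intro a ha b hb hab
  have hprim := monotoneOn_primitive_Ici hκ_int
    (fun s hs => hs.eq_or_lt.elim (fun h0 => by simp [← h0]) fun h0 =>
      mul_nonneg hs (hκ_nonneg s h0))
    ha hb hab
  rw [hφ, hφ, Real.exp_le_exp, neg_le_neg_iff, hh, hh]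
  gcongr

lemma hasDerivAt_weight (hκ_cont : ContinuousOn κ (Ioi 0))
    (hκ_int : ∀ b, 0 ≤ b → IntervalIntegrable (fun s => s * κ s) volume 0 b)
    (hh : ∀ r, h r = (σ ^ 2)⁻¹ * ((1 / 2) * (∫ s in (0:ℝ)..r, s * κ s) + α * M * r))
    (hφ : ∀ r, φ r = Real.exp (-h r)) (hr : 0 < r) :
    HasDerivAt φ (-((σ ^ 2)⁻¹ * (r * κ r / 2 + α * M)) * φ r) r := by
  have hprim := hasDerivAt_primitive_of_pos hκ_int (continuousOn_id.mul hκ_cont) hr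
  have hh' : HasDerivAt h ((σ ^ 2)⁻¹ * (r * κ r / 2 + α * M)) r := by
    rw [funext hh]
    exact (((hprim.const_mul (1 / 2)).add ((hasDerivAt_id r).const_mul (α * M))).const_mul
      (σ ^ 2)⁻¹).congr_deriv (by ring)
  rw [funext hφ, mul_comm]
  exact hh'.neg.exp

end Weight

section Correction

variable {u₁ u₂ g : ℝ → ℝ} {R₁ R₂ ξ β r : ℝ}

lemma continuousOn_correction (hu₁ : ContinuousOn u₁ (Ici 0)) (hu₂ : ContinuousOn u₂ (Ici 0))
    (hR₁ : 0 ≤ R₁) (hR₂ : 0 ≤ R₂)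
    (hg : ∀ r, g r = 1 - ξ / 4 * truncatedPrimitive u₁ R₁ r - β / 4 * truncatedPrimitive u₂ R₂ r) :
    ContinuousOn g (Ici 0) := by
  rw [funext hg]
  exact (continuousOn_const.sub (continuousOn_const.mul (continuousOn_truncatedPrimitive
    (fun _ hb => hu₁.intervalIntegrable_zero_of_Ici hb) hR₁))).sub
    (continuousOn_const.mul (continuousOn_truncatedPrimitive
      (fun _ hb => hu₂.intervalIntegrable_zero_of_Ici hb) hR₂))

lemma antitoneOn_correction (hu₁ : ContinuousOn u₁ (Ici 0)) (hu₂ : ContinuousOn u₂ (Ici 0))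
    (hpos₁ : ∀ s, 0 ≤ s → 0 ≤ u₁ s) (hpos₂ : ∀ s, 0 ≤ s → 0 ≤ u₂ s) (hR₁ : 0 ≤ R₁) (hR₂ : 0 ≤ R₂)
    (hξ : ξ = (∫ s in (0:ℝ)..R₁, u₁ s)⁻¹) (hβ : β = (∫ s in (0:ℝ)..R₂, u₂ s)⁻¹)
    (hg : ∀ r, g r = 1 - ξ / 4 * truncatedPrimitive u₁ R₁ r - β / 4 * truncatedPrimitive u₂ R₂ r) :
    AntitoneOn g (Ici 0) := by
  intro a ha b hb hab
  have h₁ := monotoneOn_truncatedPrimitive (fun _ hb => hu₁.intervalIntegrable_zero_of_Ici hb)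
    hpos₁ hR₁ ha hb hab
  have h₂ := monotoneOn_truncatedPrimitive (fun _ hb => hu₂.intervalIntegrable_zero_of_Ici hb)
    hpos₂ hR₂ ha hb hab
  have hξ₀ : 0 ≤ ξ := hξ ▸ inv_integral_nonneg hpos₁ hR₁
  have hβ₀ : 0 ≤ β := hβ ▸ inv_integral_nonneg hpos₂ hR₂
  rw [hg, hg]
  gcongr

lemma one_half_le_correction (hu₁ : ContinuousOn u₁ (Ici 0)) (hu₂ : ContinuousOn u₂ (Ici 0))
    (hpos₁ : ∀ s, 0 ≤ s → 0 ≤ u₁ s) (hpos₂ : ∀ s, 0 ≤ s → 0 ≤ u₂ s) (hR₁ : 0 ≤ R₁) (hR₂ : 0 ≤ R₂)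
    (hξ : ξ = (∫ s in (0:ℝ)..R₁, u₁ s)⁻¹) (hβ : β = (∫ s in (0:ℝ)..R₂, u₂ s)⁻¹)
    (hg : ∀ r, g r = 1 - ξ / 4 * truncatedPrimitive u₁ R₁ r - β / 4 * truncatedPrimitive u₂ R₂ r)
    {x : ℝ} (hx : 0 ≤ x) : 1 / 2 ≤ g x := by
  have h₁ := inv_mul_le_one_of_le₀ (truncatedPrimitive_le
    (fun _ hb => hu₁.intervalIntegrable_zero_of_Ici hb) hpos₁ hR₁ hx)
    (integral_nonneg hR₁ fun s hs => hpos₁ s hs.1)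
  have h₂ := inv_mul_le_one_of_le₀ (truncatedPrimitive_le
    (fun _ hb => hu₂.intervalIntegrable_zero_of_Ici hb) hpos₂ hR₂ hx)
    (integral_nonneg hR₂ fun s hs => hpos₂ s hs.1)
  rw [← hξ] at h₁
  rw [← hβ] at h₂
  rw [hg]
  linarith

lemma hasDerivAt_correction (hu₁ : ContinuousOn u₁ (Ici 0)) (hu₂ : ContinuousOn u₂ (Ici 0))
    (hg : ∀ r, g r = 1 - ξ / 4 * truncatedPrimitive u₁ R₁ r - β / 4 * truncatedPrimitive u₂ R₂ r)
    (hr : 0 < r) (hr₁ : r ≠ R₁) (hr₂ : r ≠ R₂) :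
    HasDerivAt g
      (-(ξ / 4 * if r < R₁ then u₁ r else 0) - β / 4 * if r < R₂ then u₂ r else 0) r := by
  rw [funext hg]
  exact ((hasDerivAt_truncatedPrimitive (fun _ hb => hu₁.intervalIntegrable_zero_of_Ici hb)
    (hu₁.mono Ioi_subset_Ici_self) hr hr₁).const_mul (ξ / 4) |>.const_sub 1).sub
    ((hasDerivAt_truncatedPrimitive (fun _ hb => hu₂.intervalIntegrable_zero_of_Ici hb)
      (hu₂.mono Ioi_subset_Ici_self) hr hr₂).const_mul (β / 4))

end Correction

lemma truncatedPrimitive_secondDeriv {u : ℝ → ℝ} {k a b R₁ R₂ r : ℝ}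
    (hu : ContinuousOn u (Ici 0)) (hR₁₂ : R₁ ≤ R₂) (hr : 0 < r) (hr₂ : r ≠ R₂)
    (hk : 0 ≤ k) (ha : 0 ≤ a) (hb : 0 ≤ b) (hur : 0 ≤ u r)
    (hd : r < R₂ → HasDerivAt u (-k * u r - a * (if r < R₁ then 1 else 0) - b) r) :
    DifferentiableAt ℝ (truncatedPrimitive u R₂) r ∧
      HasDerivAt (deriv (truncatedPrimitive u R₂))
        (-k * deriv (truncatedPrimitive u R₂) r - a * (if r < R₁ then (1:ℝ) else 0)
          - b * (if r < R₂ then (1:ℝ) else 0)) r ∧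
      -k * deriv (truncatedPrimitive u R₂) r - a * (if r < R₁ then (1:ℝ) else 0)
          - b * (if r < R₂ then (1:ℝ) else 0) ≤ 0 := by
  have hint := fun b (hb : 0 ≤ b) => hu.intervalIntegrable_zero_of_Ici hb
  have hf' := hasDerivAt_truncatedPrimitive hint (hu.mono Ioi_subset_Ici_self) hr hr₂
  have hf'' := hasDerivAt_deriv_truncatedPrimitive hint (hu.mono Ioi_subset_Ici_self) hr hr₂ hd
  rw [hf'.deriv]
  refine ⟨hf'.differentiableAt, ?_⟩
  rcases hr₂.lt_or_gt with hlt | hgt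
  · simp only [if_pos hlt, mul_one] at hf'' ⊢
    refine ⟨hf'', ?_⟩
    have hku : 0 ≤ k * u r := mul_nonneg hk hur
    have ha₁ : 0 ≤ a * (if r < R₁ then 1 else 0) := by positivity
    linarith
  · have hgt₁ : ¬ r < R₁ := (hR₁₂.trans_lt hgt).not_gt
    simp only [if_neg hgt.not_gt, if_neg hgt₁] at hf'' ⊢
    simpa using hf''

lemma hasDerivAt_weight_mul_correction {φ g Φ : ℝ → ℝ} {k a b R₁ r : ℝ} (hφ : φ r ≠ 0)
    (hφ' : HasDerivAt φ (-k * φ r) r)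
    (hg' : HasDerivAt g (-(a * if r < R₁ then (φ r)⁻¹ else 0) - b * (Φ r / φ r)) r) :
    HasDerivAt (fun s => φ s * g s)
      (-k * (φ r * g r) - a * (if r < R₁ then 1 else 0) - b * Φ r) r :=
  (hφ'.mul hg').congr_deriv (by split_ifs <;> field_simp <;> ring)

theorem stmt_4_general (σ α M R₁ R₂ ξ β : ℝ) (κ h φ Φ g f : ℝ → ℝ)
    (hα : 0 ≤ α) (hM : 0 < M)
    (hR₁ : 0 < R₁) (hR₁₂ : R₁ ≤ R₂)
    (hκ_cont : ContinuousOn κ (Set.Ioi (0 : ℝ)))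
    (hκ_nonneg : ∀ r : ℝ, 0 < r → 0 ≤ κ r)
    (hκ_int : IntervalIntegrable (fun s => s * κ s) volume 0 1)
    (hh : ∀ r, h r = (σ ^ 2)⁻¹ * ((1 / 2) * (∫ s in (0:ℝ)..r, s * κ s) + α * M * r))
    (hφ : ∀ r, φ r = Real.exp (-h r))
    (hΦ : ∀ r, Φ r = ∫ s in (0:ℝ)..r, φ s)
    (hξ : ξ = (∫ s in (0:ℝ)..R₁, (φ s)⁻¹)⁻¹)
    (hβ : β = (∫ s in (0:ℝ)..R₂, Φ s / φ s)⁻¹)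
    (hg : ∀ r, g r = 1 - (ξ / 4) * (∫ s in (0:ℝ)..(min r R₁), (φ s)⁻¹)
      - (β / 4) * (∫ s in (0:ℝ)..(min r R₂), Φ s / φ s))
    (hf : ∀ r, f r = ∫ s in (0:ℝ)..(min r R₂), φ s * g s) :
    (∀ r : ℝ, 0 < r → r ≠ R₁ → r ≠ R₂ →
      DifferentiableAt ℝ f r ∧
      HasDerivAt (deriv f)
        (-((σ ^ 2)⁻¹ * (r * κ r / 2 + α * M)) * deriv f r
          - (ξ / 4) * (if r < R₁ then (1:ℝ) else 0)
          - (β / 4) * Φ r * (if r < R₂ then (1:ℝ) else 0)) r ∧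
      -((σ ^ 2)⁻¹ * (r * κ r / 2 + α * M)) * deriv f r
          - (ξ / 4) * (if r < R₁ then (1:ℝ) else 0)
          - (β / 4) * Φ r * (if r < R₂ then (1:ℝ) else 0) ≤ 0) ∧
    ConcaveOn ℝ (Set.Ici (0 : ℝ)) f := by
  have hR₂ : 0 < R₂ := hR₁.trans_le hR₁₂
  have hw := fun b (hb : 0 ≤ b) =>
    hκ_int.zero_of_continuousOn_Ioi (continuousOn_id.mul hκ_cont) hb
  have hφ_pos : ∀ s, 0 < φ s := fun s => hφ s ▸ Real.exp_pos _
  have hφ_cont := continuousOn_weight hw hh hφ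
  have hΦ_cont : ContinuousOn Φ (Ici 0) := funext hΦ ▸
    continuousOn_primitive_Ici fun _ hb => hφ_cont.intervalIntegrable_zero_of_Ici hb
  have hΦ_nonneg : ∀ s, 0 ≤ s → 0 ≤ Φ s :=
    fun s hs => hΦ s ▸ integral_nonneg hs fun t _ => (hφ_pos t).le
  have hu₁ : ContinuousOn (fun s => (φ s)⁻¹) (Ici 0) := hφ_cont.inv₀ fun s _ => (hφ_pos s).ne'
  have hu₂ : ContinuousOn (fun s => Φ s / φ s) (Ici 0) :=
    hΦ_cont.div hφ_cont fun s _ => (hφ_pos s).ne'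
  have hpos₁ : ∀ s, 0 ≤ s → 0 ≤ (φ s)⁻¹ := fun s _ => (inv_pos.mpr (hφ_pos s)).le
  have hpos₂ : ∀ s, 0 ≤ s → 0 ≤ Φ s / φ s :=
    fun s hs => div_nonneg (hΦ_nonneg s hs) (hφ_pos s).le
  have hξ₀ : 0 ≤ ξ := hξ ▸ inv_integral_nonneg hpos₁ hR₁.le
  have hβ₀ : 0 ≤ β := hβ ▸ inv_integral_nonneg hpos₂ hR₂.le
  have hg_nonneg : ∀ s, 0 ≤ s → 0 ≤ g s := fun s hs => by
    linarith [one_half_le_correction hu₁ hu₂ hpos₁ hpos₂ hR₁.le hR₂.le hξ hβ hg hs]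
  have hφg_nonneg : ∀ s, 0 ≤ s → 0 ≤ φ s * g s :=
    fun s hs => mul_nonneg (hφ_pos s).le (hg_nonneg s hs)
  have hu : ContinuousOn (fun s => φ s * g s) (Ici 0) :=
    hφ_cont.mul (continuousOn_correction hu₁ hu₂ hR₁.le hR₂.le hg)
  obtain rfl : f = truncatedPrimitive (fun s => φ s * g s) R₂ := funext hf
  refine ⟨fun r hr hr₁ hr₂ => ?_, concaveOn_truncatedPrimitive hu hφg_nonneg ?_ hR₂.le⟩
  · have hk : 0 ≤ (σ ^ 2)⁻¹ * (r * κ r / 2 + α * M) := by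
      have := hκ_nonneg r hr
      positivity
    refine truncatedPrimitive_secondDeriv hu hR₁₂ hr hr₂ hk (by positivity)
      (mul_nonneg (by positivity) (hΦ_nonneg r hr.le)) (hφg_nonneg r hr.le) fun hlt => ?_
    refine hasDerivAt_weight_mul_correction (hφ_pos r).ne'
      (hasDerivAt_weight hκ_cont hw hh hφ hr) ?_
    simpa only [if_pos hlt] using hasDerivAt_correction hu₁ hu₂ hg hr hr₁ hr₂
  · have hφ_anti := antitoneOn_weight hκ_nonneg (mul_nonneg hα hM.le) hw hh hφ
    have hg_anti := antitoneOn_correction hu₁ hu₂ hpos₁ hpos₂ hR₁.le hR₂.le hξ hβ hg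
    exact fun a ha b hb hab =>
      mul_le_mul (hφ_anti ha hb hab) (hg_anti ha hb hab) (hg_nonneg b hb) (hφ_pos a).le

/-- For every `r ∈ (0,∞)` with `r ∉ {R₁, R₂}`, `f` is twice
differentiable at `r` with
`f''(r) = −h'(r) f'(r) − (ξ/4)·𝟙(r<R₁) − (β/4) Φ(r)·𝟙(r<R₂)`, where
`h'(r) = σ⁻² (r κ(r)/2 + α M)`.  In particular `f''(r) ≤ 0` at all such `r`,
and `f` is concave on `[0,∞)`. -/
theorem stmt_4 (σ α M R₁ R₂ ξ β : ℝ) (κ h φ Φ g f : ℝ → ℝ)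
    (hσ : 0 < σ) (hα : 0 ≤ α) (hM : 0 < M)
    (hR₁ : 0 < R₁) (hR₁₂ : R₁ ≤ R₂)
    (hκ_cont : ContinuousOn κ (Set.Ioi (0 : ℝ)))
    (hκ_nonneg : ∀ r : ℝ, 0 < r → 0 ≤ κ r)
    (hκ_int : IntervalIntegrable (fun s => s * κ s) volume 0 1)
    (hh : ∀ r, h r = (σ ^ 2)⁻¹ * ((1 / 2) * (∫ s in (0:ℝ)..r, s * κ s) + α * M * r))
    (hφ : ∀ r, φ r = Real.exp (-h r))
    (hΦ : ∀ r, Φ r = ∫ s in (0:ℝ)..r, φ s)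
    (hξ : ξ = (∫ s in (0:ℝ)..R₁, (φ s)⁻¹)⁻¹)
    (hβ : β = (∫ s in (0:ℝ)..R₂, Φ s / φ s)⁻¹)
    (hg : ∀ r, g r = 1 - (ξ / 4) * (∫ s in (0:ℝ)..(min r R₁), (φ s)⁻¹)
      - (β / 4) * (∫ s in (0:ℝ)..(min r R₂), Φ s / φ s))
    (hf : ∀ r, f r = ∫ s in (0:ℝ)..(min r R₂), φ s * g s) :
    (∀ r : ℝ, 0 < r → r ≠ R₁ → r ≠ R₂ →
      DifferentiableAt ℝ f r ∧
      HasDerivAt (deriv f)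
        (-((σ ^ 2)⁻¹ * (r * κ r / 2 + α * M)) * deriv f r
          - (ξ / 4) * (if r < R₁ then (1:ℝ) else 0)
          - (β / 4) * Φ r * (if r < R₂ then (1:ℝ) else 0)) r ∧
      -((σ ^ 2)⁻¹ * (r * κ r / 2 + α * M)) * deriv f r
          - (ξ / 4) * (if r < R₁ then (1:ℝ) else 0)
          - (β / 4) * Φ r * (if r < R₂ then (1:ℝ) else 0) ≤ 0) ∧
    ConcaveOn ℝ (Set.Ici (0 : ℝ)) f :=
  stmt_4_general σ α M R₁ R₂ ξ β κ h φ Φ g f hα hM hR₁ hR₁₂ hκ_cont hκ_nonneg hκ_int hh hφ hΦ hξ hβ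
    hg hf
end

section
/- For all z = (x, Θ) and z̃ = (x̃, Θ̃) in ℝⁿ × ℝ^{L×ℓ}, the drift satisfies the identity ⟨z − z̃, 𝓗(z) − 𝓗(z̃)⟩ = −(1/2)(x − x̃)ᵀ Q (x − x̃) − xᵀ P B (Θ̃ − Θ̄)ᵀ (Λ(x) − Λ(x̃)) + x̃ᵀ P B (Θ − Θ̄)ᵀ (Λ(x) − Λ(x̃)). -/
open Matrix

private lemma trace_aux {L l : ℕ} (M : Matrix (Fin L) (Fin l) ℝ) (a : Fin L → ℝ)
    (b : Fin l → ℝ) : (Mᵀ * vecMulVec a b).trace = a ⬝ᵥ M.mulVec b := by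
  simp [trace, Matrix.mul_apply, vecMulVec_apply, dotProduct, mulVec, Finset.mul_sum]
  rw [Finset.sum_comm]
  apply Finset.sum_congr rfl; intros; apply Finset.sum_congr rfl; intros; ring

private lemma key_aux {n L l : ℕ} (N : Matrix (Fin n) (Fin l) ℝ)
    (M : Matrix (Fin L) (Fin l) ℝ) (a : Fin L → ℝ) (y : Fin n → ℝ) :
    a ⬝ᵥ M.mulVec (vecMul y N) = y ⬝ᵥ N.mulVec (Mᵀ.mulVec a) := by
  rw [dotProduct_mulVec, dotProduct_mulVec, mulVec_transpose, dotProduct_comm]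

private lemma quad_aux {n : ℕ} (A P Q : Matrix (Fin n) (Fin n) ℝ) (hP : Pᵀ = P)
    (hLyap : Aᵀ * P + P * A = -Q) (d : Fin n → ℝ) :
    d ⬝ᵥ P.mulVec (A.mulVec d) = -(1/2) * (d ⬝ᵥ Q.mulVec d) := by
  have h1 : d ⬝ᵥ (Aᵀ * P).mulVec d = d ⬝ᵥ (P * A).mulVec d := by
    rw [← mulVec_mulVec, ← mulVec_mulVec, dotProduct_mulVec, vecMul_transpose,
      dotProduct_mulVec d P, ← hP, vecMul_transpose, hP, dotProduct_comm]
  have h2 : d ⬝ᵥ (Aᵀ * P + P * A).mulVec d = d ⬝ᵥ (-Q).mulVec d := by rw [hLyap]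
  rw [add_mulVec, dotProduct_add, h1, neg_mulVec, dotProduct_neg] at h2
  rw [mulVec_mulVec]
  linarith

/-- Drift inner-product identity for the adaptive regulator.
With `𝓗(x,Θ) = (A x + B (Θ̄ − Θ)ᵀ Λ(x), Λ(x) xᵀ P B)` and the inner product
`⟨(x,Θ),(x',Θ')⟩ = xᵀ P x' + tr(Θᵀ Θ')` on `ℝⁿ × ℝ^{L×ℓ}`, for all
`z = (x,Θ)` and `z' = (x',Θ')`:
`⟨z − z', 𝓗(z) − 𝓗(z')⟩ = −(1/2)(x−x')ᵀ Q (x−x') − xᵀPB(Θ'−Θ̄)ᵀ(Λx−Λx') + x'ᵀPB(Θ−Θ̄)ᵀ(Λx−Λx')`. -/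
theorem stmt_9 {n l L : ℕ}
    (A : Matrix (Fin n) (Fin n) ℝ) (B : Matrix (Fin n) (Fin l) ℝ)
    (P Q : Matrix (Fin n) (Fin n) ℝ)
    (hP : P.PosDef) (hQ : Q.PosDef)
    (hLyap : Aᵀ * P + P * A = -Q)
    (Λ : (Fin n → ℝ) → (Fin L → ℝ))
    (Θbar : Matrix (Fin L) (Fin l) ℝ) :
    ∀ (x x' : Fin n → ℝ) (Θ Θ' : Matrix (Fin L) (Fin l) ℝ),
      (x - x') ⬝ᵥ P.mulVec
          ((A.mulVec x + B.mulVec ((Θbar - Θ)ᵀ.mulVec (Λ x)))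
            - (A.mulVec x' + B.mulVec ((Θbar - Θ')ᵀ.mulVec (Λ x'))))
        + ((Θ - Θ')ᵀ *
            (vecMulVec (Λ x) (vecMul x (P * B))
              - vecMulVec (Λ x') (vecMul x' (P * B)))).trace
      = -(1 / 2) * ((x - x') ⬝ᵥ Q.mulVec (x - x'))
          - x ⬝ᵥ (P * B).mulVec ((Θ' - Θbar)ᵀ.mulVec (Λ x - Λ x'))
          + x' ⬝ᵥ (P * B).mulVec ((Θ - Θbar)ᵀ.mulVec (Λ x - Λ x')) := by
  intro x x' Θ Θ'
  have hq := quad_aux A P Q hP.1.eq hLyap (x - x')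
  rw [Matrix.mul_sub, trace_sub, trace_aux, trace_aux, key_aux, key_aux]
  simp only [transpose_sub, sub_mulVec, mulVec_sub, mulVec_add, add_mulVec,
    dotProduct_sub, sub_dotProduct, dotProduct_add, add_dotProduct, mulVec_mulVec,
    Matrix.mul_sub, Matrix.sub_mul, Matrix.mul_assoc] at hq ⊢
  linear_combination hq
end

section
/- For all z = (x, Θ) and z̃ = (x̃, Θ̃) in ℝⁿ × ℝ^{L×ℓ} with ‖Θ − Θ̄‖_F ≤ D, ‖Θ̃ − Θ̄‖_F ≤ D and ‖Θ − Θ̃‖_F ≤ D, the drift 𝓗 satisfies the one-sided growth condition ⟨z − z̃, 𝓗(z) − 𝓗(z̃)⟩ ≤ c r² + c r (‖z‖ + ‖z̃‖), where r = ‖z − z̃‖ and c = ‖P B‖₂ · D · 𝓛 / λ_min(P), with λ_min(P) the smallest eigenvalue of P and ‖P B‖₂ the spectral norm of P B. -/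
/-!
Expanding the pairing, the `A`-part of the state drift contributes
`(x - x')ᵀ P A (x - x') = -(x - x')ᵀ Q (x - x') / 2 ≤ 0`, and the parameter drift cancels the part
of the state drift that is linear in `Θ - Θ'`, leaving
`(x - x')ᵀ P B (Θ̄ - Θ)ᵀ (Λ x - Λ x') + xᵀ P B (Θ - Θ')ᵀ (Λ x - Λ x')`.
Cauchy–Schwarz, the spectral norm of `P B`, the Frobenius bounds on `Θ̄ - Θ` and `Θ - Θ'` and the
Lipschitz bound on `Λ` bound this by `‖P B‖₂ D 𝓛 (|x - x'|² + |x| |x - x'|)`, and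
`λ_min(P) |y|² ≤ yᵀ P y` turns these Euclidean norms into the norms of `z - z'` and `z`.
-/

open Matrix

/-- Frobenius norm of a real matrix. -/
noncomputable def frobNorm {a b : ℕ} (M : Matrix (Fin a) (Fin b) ℝ) : ℝ :=
  Real.sqrt (∑ i, ∑ j, M i j ^ 2)

/-- Spectral (induced Euclidean operator) norm of a real matrix. -/
noncomputable def specNorm {a b : ℕ} (M : Matrix (Fin a) (Fin b) ℝ) : ℝ :=
  ‖LinearMap.toContinuousLinearMap (Matrix.toEuclideanLin M)‖

/-- The norm `‖z‖ = (xᵀ P x + ‖Θ‖_F²)^{1/2}` on `ℝⁿ × ℝ^{L×ℓ}` induced by the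
inner product `⟨(x,Θ),(x',Θ')⟩ = xᵀ P x' + tr(Θᵀ Θ')`. -/
noncomputable def prodNorm {n L l : ℕ} (P : Matrix (Fin n) (Fin n) ℝ)
    (x : Fin n → ℝ) (Θ : Matrix (Fin L) (Fin l) ℝ) : ℝ :=
  Real.sqrt (x ⬝ᵥ P.mulVec x + ∑ i, ∑ j, Θ i j ^ 2)

lemma frobNorm_nonneg {a b : ℕ} (M : Matrix (Fin a) (Fin b) ℝ) : 0 ≤ frobNorm M :=
  Real.sqrt_nonneg _

lemma frobNorm_sub_comm {a b : ℕ} (M N : Matrix (Fin a) (Fin b) ℝ) :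
    frobNorm (M - N) = frobNorm (N - M) := by
  rw [← neg_sub]
  simp only [frobNorm, Matrix.neg_apply, neg_sq]

lemma prodNorm_nonneg {n L l : ℕ} (P : Matrix (Fin n) (Fin n) ℝ) (x : Fin n → ℝ)
    (Θ : Matrix (Fin L) (Fin l) ℝ) : 0 ≤ prodNorm P x Θ :=
  Real.sqrt_nonneg _

lemma specNorm_nonneg {a b : ℕ} (M : Matrix (Fin a) (Fin b) ℝ) : 0 ≤ specNorm M :=
  norm_nonneg _

lemma sqrt_sum_sq_mulVec_le_specNorm {a b : ℕ} (M : Matrix (Fin a) (Fin b) ℝ) (w : Fin b → ℝ) :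
    √(∑ i, (M *ᵥ w) i ^ 2) ≤ specNorm M * √(∑ i, w i ^ 2) := by
  simpa [specNorm, EuclideanSpace.norm_eq, Real.norm_eq_abs, sq_abs] using
    (LinearMap.toContinuousLinearMap (toEuclideanLin M)).le_opNorm (WithLp.toLp 2 w)

lemma sqrt_sum_sq_transpose_mulVec_le_frobNorm {a b : ℕ} (M : Matrix (Fin a) (Fin b) ℝ)
    (v : Fin a → ℝ) : √(∑ j, (Mᵀ *ᵥ v) j ^ 2) ≤ frobNorm M * √(∑ i, v i ^ 2) := by
  rw [frobNorm, ← Real.sqrt_mul (by positivity)]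
  refine Real.sqrt_le_sqrt ?_
  rw [Finset.sum_comm, Finset.sum_mul]
  refine Finset.sum_le_sum fun j _ => ?_
  simpa [mulVec, dotProduct] using Finset.sum_mul_sq_le_sq_mul_sq Finset.univ (fun i => M i j) v

lemma dotProduct_mulVec_transpose_mulVec_le {a b c : ℕ} (u : Fin a → ℝ)
    (N : Matrix (Fin a) (Fin b) ℝ) (M : Matrix (Fin c) (Fin b) ℝ) (v : Fin c → ℝ) :
    u ⬝ᵥ N *ᵥ (Mᵀ *ᵥ v) ≤ √(∑ i, u i ^ 2) * (specNorm N * (frobNorm M * √(∑ i, v i ^ 2))) :=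
  calc u ⬝ᵥ N *ᵥ (Mᵀ *ᵥ v) ≤ √(∑ i, u i ^ 2) * √(∑ i, (N *ᵥ (Mᵀ *ᵥ v)) i ^ 2) :=
        Real.sum_mul_le_sqrt_mul_sqrt _ _ _
    _ ≤ √(∑ i, u i ^ 2) * (specNorm N * √(∑ j, (Mᵀ *ᵥ v) j ^ 2)) := by
        gcongr; exact sqrt_sum_sq_mulVec_le_specNorm _ _
    _ ≤ _ := by
        gcongr
        · exact specNorm_nonneg N
        · exact sqrt_sum_sq_transpose_mulVec_le_frobNorm M v

lemma nonneg_of_sqrt_sum_sq_sub_le {ι κ : Type*} [Fintype ι] [Nonempty ι] [Fintype κ]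
    {f : (ι → ℝ) → κ → ℝ} {K : ℝ}
    (hf : ∀ x y, √(∑ i, (f x - f y) i ^ 2) ≤ K * √(∑ i, (x - y) i ^ 2)) : 0 ≤ K := by
  have hpos : 0 < √(∑ i, ((1 : ι → ℝ) - 0) i ^ 2) := by simp [Fintype.card_pos]
  exact (mul_nonneg_iff_of_pos_right hpos).mp ((Real.sqrt_nonneg _).trans (hf 1 0))

namespace Matrix

section Eigenvalues

variable {m : Type*} [Fintype m] [DecidableEq m] {A : Matrix m m ℝ}

lemma IsHermitian.posSemidef_sub_iInf_eigenvalues_smul_one (hA : A.IsHermitian) :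
    (A - (⨅ i, hA.eigenvalues i) • (1 : Matrix m m ℝ)).PosSemidef := by
  refine posSemidef_iff_isHermitian_and_spectrum_nonneg.mpr
    ⟨hA.sub (isHermitian_one.smul (IsSelfAdjoint.all _)), ?_⟩
  rw [← Algebra.algebraMap_eq_smul_one, ← spectrum.sub_singleton_eq,
    hA.spectrum_real_eq_range_eigenvalues]
  rintro _ ⟨_, ⟨i, rfl⟩, _, rfl, rfl⟩
  exact sub_nonneg.mpr (ciInf_le (Finite.bddBelow_range hA.eigenvalues) i)

lemma IsHermitian.iInf_eigenvalues_mul_sum_sq_le (hA : A.IsHermitian) (x : m → ℝ) :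
    (⨅ i, hA.eigenvalues i) * ∑ i, x i ^ 2 ≤ x ⬝ᵥ A *ᵥ x := by
  have h := hA.posSemidef_sub_iInf_eigenvalues_smul_one.dotProduct_mulVec_nonneg x
  simp only [star_trivial, sub_mulVec, smul_mulVec, one_mulVec, dotProduct_sub,
    dotProduct_smul, smul_eq_mul] at h
  simpa [dotProduct, sq] using h

lemma PosDef.iInf_eigenvalues_pos [Nonempty m] (hA : A.PosDef) : 0 < ⨅ i, hA.1.eigenvalues i := by
  obtain ⟨i, hi⟩ := exists_eq_ciInf_of_finite (f := hA.1.eigenvalues)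
  exact hi ▸ hA.eigenvalues_pos i

lemma IsHermitian.sqrt_iInf_eigenvalues_mul_le_prodNorm {n L l : ℕ}
    {P : Matrix (Fin n) (Fin n) ℝ} (hP : P.IsHermitian) (x : Fin n → ℝ)
    (Θ : Matrix (Fin L) (Fin l) ℝ) :
    √(⨅ i, hP.eigenvalues i) * √(∑ i, x i ^ 2) ≤ prodNorm P x Θ := by
  rw [← Real.sqrt_mul' _ (by positivity), prodNorm]
  refine Real.sqrt_le_sqrt ?_
  have := hP.iInf_eigenvalues_mul_sum_sq_le x
  have : 0 ≤ ∑ i, ∑ j, Θ i j ^ 2 := by positivity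
  linarith

end Eigenvalues

lemma IsSymm.dotProduct_mulVec_mulVec_nonpos_of_lyapunov {m : Type*} [Fintype m]
    {A P Q : Matrix m m ℝ} (hP : P.IsSymm) (hQ : Q.PosSemidef) (hAPQ : Aᵀ * P + P * A = -Q)
    (e : m → ℝ) : e ⬝ᵥ P *ᵥ (A *ᵥ e) ≤ 0 := by
  have hsymm : e ⬝ᵥ (Aᵀ * P) *ᵥ e = e ⬝ᵥ P *ᵥ (A *ᵥ e) := by
    rw [← mulVec_mulVec, dotProduct_mulVec, vecMul_transpose, dotProduct_comm,
      dotProduct_mulVec e P, ← mulVec_transpose, hP.eq]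
  have hQe : 0 ≤ e ⬝ᵥ Q *ᵥ e := by simpa using hQ.dotProduct_mulVec_nonneg e
  have := congrArg (fun M => e ⬝ᵥ M *ᵥ e) hAPQ
  simp only [add_mulVec, dotProduct_add, neg_mulVec, dotProduct_neg] at this
  rw [hsymm, ← mulVec_mulVec] at this
  linarith

lemma trace_transpose_mul_vecMulVec {p q : Type*} [Fintype p] [Fintype q]
    (M : Matrix p q ℝ) (v : p → ℝ) (w : q → ℝ) : (Mᵀ * vecMulVec v w).trace = v ⬝ᵥ M *ᵥ w := by
  simp only [trace, diag, mul_apply, vecMulVec_apply, transpose_apply, dotProduct, mulVec,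
    Finset.mul_sum]
  rw [Finset.sum_comm]
  exact Finset.sum_congr rfl fun k _ => Finset.sum_congr rfl fun j _ => by ring

end Matrix

lemma drift_pairing_eq {m p q : Type*} [Fintype m] [Fintype p] [Fintype q]
    (A P : Matrix m m ℝ) (B : Matrix m q ℝ) (Θbar Θ Θ' : Matrix p q ℝ) (x x' : m → ℝ)
    (v v' : p → ℝ) :
    (x - x') ⬝ᵥ P *ᵥ ((A *ᵥ x + B *ᵥ ((Θbar - Θ)ᵀ *ᵥ v)) - (A *ᵥ x' + B *ᵥ ((Θbar - Θ')ᵀ *ᵥ v')))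
        + ((Θ - Θ')ᵀ * (vecMulVec v (x ᵥ* (P * B)) - vecMulVec v' (x' ᵥ* (P * B)))).trace
      = (x - x') ⬝ᵥ P *ᵥ (A *ᵥ (x - x'))
        + (x - x') ⬝ᵥ (P * B) *ᵥ ((Θbar - Θ)ᵀ *ᵥ (v - v'))
        + x ⬝ᵥ (P * B) *ᵥ ((Θ - Θ')ᵀ *ᵥ (v - v')) := by
  have hshift : ∀ (w : p → ℝ) (y : m → ℝ),
      w ⬝ᵥ (Θ - Θ') *ᵥ (y ᵥ* (P * B)) = y ⬝ᵥ (P * B) *ᵥ ((Θ - Θ')ᵀ *ᵥ w) := fun w y => by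
    rw [dotProduct_mulVec, ← mulVec_transpose, dotProduct_comm, ← dotProduct_mulVec]
  rw [Matrix.mul_sub, trace_sub, trace_transpose_mul_vecMulVec, trace_transpose_mul_vecMulVec,
    hshift, hshift]
  simp only [transpose_sub, mulVec_add, mulVec_sub, sub_mulVec, ← mulVec_mulVec, dotProduct_add,
    dotProduct_sub, sub_dotProduct]
  ring

lemma drift_pairing_le {n l L : ℕ} {A P Q : Matrix (Fin n) (Fin n) ℝ} (B : Matrix (Fin n) (Fin l) ℝ)
    (hP : P.IsSymm) (hQ : Q.PosSemidef) (hLyap : Aᵀ * P + P * A = -Q) {D 𝓛 : ℝ}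
    {Θbar Θ Θ' : Matrix (Fin L) (Fin l) ℝ} (hΘ : frobNorm (Θ - Θbar) ≤ D)
    (hΘΘ' : frobNorm (Θ - Θ') ≤ D) {x x' : Fin n → ℝ} {v v' : Fin L → ℝ}
    (hv : √(∑ i, (v - v') i ^ 2) ≤ 𝓛 * √(∑ i, (x - x') i ^ 2)) :
    (x - x') ⬝ᵥ P *ᵥ ((A *ᵥ x + B *ᵥ ((Θbar - Θ)ᵀ *ᵥ v)) - (A *ᵥ x' + B *ᵥ ((Θbar - Θ')ᵀ *ᵥ v')))
        + ((Θ - Θ')ᵀ * (vecMulVec v (x ᵥ* (P * B)) - vecMulVec v' (x' ᵥ* (P * B)))).trace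
      ≤ specNorm (P * B) * D * 𝓛 *
          (√(∑ i, (x - x') i ^ 2) ^ 2 + √(∑ i, x i ^ 2) * √(∑ i, (x - x') i ^ 2)) := by
  have hD : 0 ≤ D := (frobNorm_nonneg _).trans hΘ
  have hcross : ∀ (u : Fin n → ℝ) (M : Matrix (Fin L) (Fin l) ℝ), frobNorm M ≤ D →
      u ⬝ᵥ (P * B) *ᵥ (Mᵀ *ᵥ (v - v'))
        ≤ √(∑ i, u i ^ 2) * (specNorm (P * B) * (D * (𝓛 * √(∑ i, (x - x') i ^ 2)))) :=
    fun u M hM => (dotProduct_mulVec_transpose_mulVec_le u _ M _).trans <| by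
      gcongr
      · exact specNorm_nonneg _
  have hlyap := hP.dotProduct_mulVec_mulVec_nonpos_of_lyapunov hQ hLyap (x - x')
  have h₁ := hcross (x - x') (Θbar - Θ) (frobNorm_sub_comm Θbar Θ ▸ hΘ)
  have h₂ := hcross x (Θ - Θ') hΘΘ'
  rw [drift_pairing_eq]
  linarith

theorem stmt_12_general {n l L : ℕ} (hn : 0 < n)
    (A : Matrix (Fin n) (Fin n) ℝ) (B : Matrix (Fin n) (Fin l) ℝ)
    (P Q : Matrix (Fin n) (Fin n) ℝ)
    (hP : P.PosDef) (hQ : Q.PosDef)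
    (hLyap : Aᵀ * P + P * A = -Q)
    (D 𝓛 : ℝ)
    (Λ : (Fin n → ℝ) → (Fin L → ℝ))
    (hΛ : ∀ x x' : Fin n → ℝ,
      Real.sqrt (∑ i, (Λ x - Λ x') i ^ 2) ≤ 𝓛 * Real.sqrt (∑ i, (x - x') i ^ 2))
    (Θbar : Matrix (Fin L) (Fin l) ℝ) (c : ℝ)
    (hc : c = specNorm (P * B) * D * 𝓛 / (⨅ i, hP.1.eigenvalues i)) :
    ∀ (x x' : Fin n → ℝ) (Θ Θ' : Matrix (Fin L) (Fin l) ℝ),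
      frobNorm (Θ - Θbar) ≤ D → frobNorm (Θ' - Θbar) ≤ D →
      frobNorm (Θ - Θ') ≤ D →
      (x - x') ⬝ᵥ P.mulVec
          ((A.mulVec x + B.mulVec ((Θbar - Θ)ᵀ.mulVec (Λ x)))
            - (A.mulVec x' + B.mulVec ((Θbar - Θ')ᵀ.mulVec (Λ x'))))
        + ((Θ - Θ')ᵀ *
            (vecMulVec (Λ x) (vecMul x (P * B))
              - vecMulVec (Λ x') (vecMul x' (P * B)))).trace
      ≤ c * prodNorm P (x - x') (Θ - Θ') ^ 2
          + c * prodNorm P (x - x') (Θ - Θ') *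
              (prodNorm P x Θ + prodNorm P x' Θ') := by
  intro x x' Θ Θ' hΘ _ hΘΘ'
  have : Nonempty (Fin n) := ⟨⟨0, hn⟩⟩
  have he := hP.1.sqrt_iInf_eigenvalues_mul_le_prodNorm (x - x') (Θ - Θ')
  have hx := hP.1.sqrt_iInf_eigenvalues_mul_le_prodNorm x Θ
  have hμ := hP.iInf_eigenvalues_pos
  set μ := ⨅ i, hP.1.eigenvalues i
  have hc₀ : 0 ≤ c := hc ▸ div_nonneg (mul_nonneg (mul_nonneg (specNorm_nonneg _)
    ((frobNorm_nonneg _).trans hΘ)) (nonneg_of_sqrt_sum_sq_sub_le hΛ)) hμ.le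
  have hz' := mul_nonneg (mul_nonneg hc₀ (prodNorm_nonneg P (x - x') (Θ - Θ')))
    (prodNorm_nonneg P x' Θ')
  calc _ ≤ specNorm (P * B) * D * 𝓛 *
          (√(∑ i, (x - x') i ^ 2) ^ 2 + √(∑ i, x i ^ 2) * √(∑ i, (x - x') i ^ 2)) :=
        drift_pairing_le B (isHermitian_iff_isSymm.mp hP.1) hQ.posSemidef hLyap hΘ hΘΘ'
          (hΛ x x')
    _ = c * ((√μ * √(∑ i, (x - x') i ^ 2)) ^ 2
          + (√μ * √(∑ i, x i ^ 2)) * (√μ * √(∑ i, (x - x') i ^ 2))) := by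
        rw [hc]
        field_simp
        rw [Real.sq_sqrt hμ.le]
    _ ≤ c * (prodNorm P (x - x') (Θ - Θ') ^ 2
          + prodNorm P x Θ * prodNorm P (x - x') (Θ - Θ')) := by
        gcongr
        exact prodNorm_nonneg P x Θ
    _ ≤ _ := by linarith

/-- The adaptive-regulation drift
`𝓗(x,Θ) = (A x + B (Θ̄ − Θ)ᵀ Λ(x), Λ(x) xᵀ P B)` satisfies the one-sided
growth condition `⟨z − z', 𝓗(z) − 𝓗(z')⟩ ≤ c r² + c r (‖z‖ + ‖z'‖)` with
`r = ‖z − z'‖` and `c = ‖PB‖₂ D 𝓛 / λ_min(P)`, whenever the parameter blocks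
satisfy `‖Θ − Θ̄‖_F ≤ D`, `‖Θ' − Θ̄‖_F ≤ D` and `‖Θ − Θ'‖_F ≤ D`. -/
theorem stmt_12 {n l L : ℕ} (hn : 0 < n)
    (A : Matrix (Fin n) (Fin n) ℝ) (B : Matrix (Fin n) (Fin l) ℝ)
    (P Q : Matrix (Fin n) (Fin n) ℝ)
    (hP : P.PosDef) (hQ : Q.PosDef)
    (hLyap : Aᵀ * P + P * A = -Q)
    (D 𝓛 : ℝ) (hD : 0 < D)
    (Λ : (Fin n → ℝ) → (Fin L → ℝ))
    (hΛ : ∀ x x' : Fin n → ℝ,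
      Real.sqrt (∑ i, (Λ x - Λ x') i ^ 2) ≤ 𝓛 * Real.sqrt (∑ i, (x - x') i ^ 2))
    (Θbar : Matrix (Fin L) (Fin l) ℝ) (c : ℝ)
    (hc : c = specNorm (P * B) * D * 𝓛 / (⨅ i, hP.1.eigenvalues i)) :
    ∀ (x x' : Fin n → ℝ) (Θ Θ' : Matrix (Fin L) (Fin l) ℝ),
      frobNorm (Θ - Θbar) ≤ D → frobNorm (Θ' - Θbar) ≤ D →
      frobNorm (Θ - Θ') ≤ D →
      (x - x') ⬝ᵥ P.mulVec
          ((A.mulVec x + B.mulVec ((Θbar - Θ)ᵀ.mulVec (Λ x)))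
            - (A.mulVec x' + B.mulVec ((Θbar - Θ')ᵀ.mulVec (Λ x'))))
        + ((Θ - Θ')ᵀ *
            (vecMulVec (Λ x) (vecMul x (P * B))
              - vecMulVec (Λ x') (vecMul x' (P * B)))).trace
      ≤ c * prodNorm P (x - x') (Θ - Θ') ^ 2
          + c * prodNorm P (x - x') (Θ - Θ') *
              (prodNorm P x Θ + prodNorm P x' Θ') :=
  stmt_12_general hn A B P Q hP hQ hLyap D 𝓛 Λ hΛ Θbar c hc
end
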